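/- arXiv:1712.09529 — 4 statements merged into one kernel-verified Lean document; each statement's English description precedes it below -/
import Mathlib

section
/- Let Γ be a strictly Deza graph with parameters (n, k, b, a) with k = b + 1 and β(v) > 1 for every vertex v. Then for every vertex v of Γ, exactly one of the following holds: (1) B(v) ∩ N(v) = ∅; (2) B(v) ⊆ N(v); (3) |B(v) ∩ N(v)| = 1. -/
open Finset SimpleGraph

universe u v

/-- The number of common neighbours of two vertices. -/
def commonNbrs {V : Type u} [Fintype V] [DecidableEq V] (G : SimpleGraph V)
    [DecidableRel G.Adj] (x y : V) : ℕ :=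
  (G.neighborFinset x ∩ G.neighborFinset y).card

/-- `G` is a Deza graph with parameters `(n, k, b, a)`: a nonempty `k`-regular graph on `n`
vertices in which any two distinct vertices have either `b` or `a` common neighbours,
where `b ≥ a`. -/
def IsDezaGraph {V : Type u} [Fintype V] [DecidableEq V] (G : SimpleGraph V)
    [DecidableRel G.Adj] (n k b a : ℕ) : Prop :=
  G ≠ ⊥ ∧ Fintype.card V = n ∧ G.IsRegularOfDegree k ∧ a ≤ b ∧
    ∀ x y : V, x ≠ y → commonNbrs G x y = b ∨ commonNbrs G x y = a

/-- `G` is a strictly Deza graph with parameters `(n, k, b, a)`: a Deza graph of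
diameter 2 that is not strongly regular. -/
def IsStrictlyDezaGraph {V : Type u} [Fintype V] [DecidableEq V] (G : SimpleGraph V)
    [DecidableRel G.Adj] (n k b a : ℕ) : Prop :=
  IsDezaGraph G n k b a ∧ G.Connected ∧ (∀ x y : V, G.dist x y ≤ 2) ∧
    (∃ x y : V, G.dist x y = 2) ∧ ¬ ∃ ℓ μ : ℕ, G.IsSRGWith n k ℓ μ

/-- `B(v)`: the set of vertices `u ≠ v` having exactly `b` common neighbours with `v`. -/
def dezaB {V : Type u} [Fintype V] [DecidableEq V] (G : SimpleGraph V)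
    [DecidableRel G.Adj] (b : ℕ) (v : V) : Finset V :=
  univ.filter fun u => u ≠ v ∧ commonNbrs G u v = b

/-- `A(v)`: the set of vertices `u ≠ v` having exactly `a` common neighbours with `v`. -/
def dezaA {V : Type u} [Fintype V] [DecidableEq V] (G : SimpleGraph V)
    [DecidableRel G.Adj] (a : ℕ) (v : V) : Finset V :=
  univ.filter fun u => u ≠ v ∧ commonNbrs G u v = a

/-- `B[v] = B(v) ∪ {v}`. -/
def dezaBc {V : Type u} [Fintype V] [DecidableEq V] (G : SimpleGraph V)
    [DecidableRel G.Adj] (b : ℕ) (v : V) : Finset V :=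
  insert v (dezaB G b v)

/-- A vertex `v` is of type (A) if `B(v) ∩ N(v) = ∅`. -/
def IsTypeA {V : Type u} [Fintype V] [DecidableEq V] (G : SimpleGraph V)
    [DecidableRel G.Adj] (b : ℕ) (v : V) : Prop :=
  dezaB G b v ∩ G.neighborFinset v = ∅

/-- A vertex `v` is of type (B) if `B(v) ⊆ N(v)`. -/
def IsTypeB {V : Type u} [Fintype V] [DecidableEq V] (G : SimpleGraph V)
    [DecidableRel G.Adj] (b : ℕ) (v : V) : Prop :=
  dezaB G b v ⊆ G.neighborFinset v

/-- A vertex `v` is of type (C) if `|B(v) ∩ N(v)| = 1`. -/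
def IsTypeC {V : Type u} [Fintype V] [DecidableEq V] (G : SimpleGraph V)
    [DecidableRel G.Adj] (b : ℕ) (v : V) : Prop :=
  (dezaB G b v ∩ G.neighborFinset v).card = 1

/-- A vertex `x` of type (A) is of type (A1) if there exists `y ∈ N(x)` with
`N(x) \ N(xᵢ) = {y}` for every `xᵢ ∈ B(x)`. -/
def IsTypeA1 {V : Type u} [Fintype V] [DecidableEq V] (G : SimpleGraph V)
    [DecidableRel G.Adj] (b : ℕ) (x : V) : Prop :=
  IsTypeA G b x ∧ ∃ y ∈ G.neighborFinset x,
    ∀ xi ∈ dezaB G b x, G.neighborFinset x \ G.neighborFinset xi = {y}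

/-- A vertex `x` of type (A) is of type (A2) if there exists `z ∉ N[x]` with
`N(xᵢ) \ N(x) = {z}` for every `xᵢ ∈ B(x)`. -/
def IsTypeA2 {V : Type u} [Fintype V] [DecidableEq V] (G : SimpleGraph V)
    [DecidableRel G.Adj] (b : ℕ) (x : V) : Prop :=
  IsTypeA G b x ∧ ∃ z ∉ insert x (G.neighborFinset x),
    ∀ xi ∈ dezaB G b x, G.neighborFinset xi \ G.neighborFinset x = {z}

/-- The complete multipartite graph with `m` parts of size `t`. -/
def completeMultipartiteGr (m t : ℕ) : SimpleGraph (Fin m × Fin t) where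
  Adj u v := u.1 ≠ v.1
  symm := ⟨fun _ _ h => Ne.symm h⟩
  loopless := ⟨fun _ h => h rfl⟩

/-- The 2-clique extension of a graph `H`: vertices `(u, i)` and `(v, j)` are adjacent
iff `u ~ v` in `H`, or `u = v` and `i ≠ j`. -/
def cliqueExt2 {W : Type v} (H : SimpleGraph W) : SimpleGraph (W × Fin 2) where
  Adj u v := H.Adj u.1 v.1 ∨ (u.1 = v.1 ∧ u.2 ≠ v.2)
  symm := by
    constructor
    intro u v h
    rcases h with h | ⟨h1, h2⟩
    · exact Or.inl h.symm
    · exact Or.inr ⟨h1.symm, h2.symm⟩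
  loopless := by
    constructor
    intro u h
    rcases h with h | ⟨_, h2⟩
    · exact H.loopless.irrefl _ h
    · exact h2 rfl


/-!
A vertex `u ∈ B(x)` adjacent to `x` has `b + 1 = k` neighbours, namely `x` and the `b` common
neighbours of `u` and `x`; hence `N(u) ⊆ N[x]`. A vertex `w ∈ B(x)` not adjacent to `x` misses
exactly one vertex of `N(x)`. So if two vertices `u₁ ≠ u₂` lie in `B(x) ∩ N(x)`, one of them is
adjacent to `w`, forcing `w ∈ N[x]`, which is absurd. Thus `|B(x) ∩ N(x)| ≥ 2` implies
`B(x) ⊆ N(x)`, and `β(x) > 1` separates the three cases.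
-/

section

variable {V : Type*} [Fintype V] [DecidableEq V] {G : SimpleGraph V} [DecidableRel G.Adj]

theorem neighborFinset_subset_insert_of_commonNbrs_add_one {u x : V} (hadj : G.Adj u x)
    (h : commonNbrs G u x + 1 = G.degree u) :
    G.neighborFinset u ⊆ insert x (G.neighborFinset x) := by
  have hx : x ∉ G.neighborFinset u ∩ G.neighborFinset x := by simp
  have heq : insert x (G.neighborFinset u ∩ G.neighborFinset x) = G.neighborFinset u := by
    refine eq_of_subset_of_card_le
      (insert_subset (by simpa using hadj) inter_subset_left) ?_
    rw [card_insert_of_notMem hx, card_neighborFinset_eq_degree, ← h, commonNbrs]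
  rw [← heq]
  exact insert_subset_insert x inter_subset_right

theorem card_neighborFinset_sdiff_of_commonNbrs_add_one {w x : V}
    (h : commonNbrs G w x + 1 = G.degree x) :
    (G.neighborFinset x \ G.neighborFinset w).card = 1 := by
  have hsplit := card_sdiff_add_card_inter (G.neighborFinset x) (G.neighborFinset w)
  rw [inter_comm, ← commonNbrs, card_neighborFinset_eq_degree] at hsplit
  omega

theorem adj_or_adj_of_commonNbrs_add_one {w x u₁ u₂ : V}
    (h : commonNbrs G w x + 1 = G.degree x) (hu₁ : G.Adj x u₁) (hu₂ : G.Adj x u₂)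
    (hne : u₁ ≠ u₂) : G.Adj w u₁ ∨ G.Adj w u₂ := by
  by_contra! hnone
  exact hne <| card_le_one.mp (card_neighborFinset_sdiff_of_commonNbrs_add_one h).le
    u₁ (by simpa [hu₁] using hnone.1) u₂ (by simpa [hu₂] using hnone.2)

variable {b : ℕ}

theorem isTypeB_of_one_lt_card_inter (hreg : G.IsRegularOfDegree (b + 1)) {x : V}
    (h : 1 < (dezaB G b x ∩ G.neighborFinset x).card) : IsTypeB G b x := by
  have hB {v : V} : v ∈ dezaB G b x ↔ v ≠ x ∧ commonNbrs G v x = b := by simp [dezaB]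
  have hNx {u : V} (hu : u ∈ dezaB G b x ∩ G.neighborFinset x) :
      G.Adj x u ∧ G.neighborFinset u ⊆ insert x (G.neighborFinset x) := by
    obtain ⟨huB, hux⟩ := mem_inter.mp hu
    have hxu : G.Adj x u := (G.mem_neighborFinset x u).mp hux
    exact ⟨hxu, neighborFinset_subset_insert_of_commonNbrs_add_one hxu.symm
      (by rw [(hB.mp huB).2, hreg u])⟩
  obtain ⟨u₁, hu₁, u₂, hu₂, hne⟩ := one_lt_card.mp h
  intro w hw
  obtain ⟨hwx, hwb⟩ := hB.mp hw
  obtain ⟨u, hu, hwu⟩ : ∃ u ∈ dezaB G b x ∩ G.neighborFinset x, G.Adj w u := by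
    rcases adj_or_adj_of_commonNbrs_add_one (by rw [hwb, hreg x]) (hNx hu₁).1 (hNx hu₂).1 hne
      with h | h
    exacts [⟨u₁, hu₁, h⟩, ⟨u₂, hu₂, h⟩]
  have hw' := (hNx hu).2 ((G.mem_neighborFinset u w).mpr hwu.symm)
  exact (mem_insert.mp hw').resolve_left hwx

theorem isTypeA_or_isTypeB_or_isTypeC {x : V} (hβ : 1 < (dezaB G b x).card)
    (hB : 1 < (dezaB G b x ∩ G.neighborFinset x).card → IsTypeB G b x) :
    (IsTypeA G b x ∧ ¬ IsTypeB G b x ∧ ¬ IsTypeC G b x) ∨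
      (¬ IsTypeA G b x ∧ IsTypeB G b x ∧ ¬ IsTypeC G b x) ∨
      (¬ IsTypeA G b x ∧ ¬ IsTypeB G b x ∧ IsTypeC G b x) := by
  have hB_iff : IsTypeB G b x ↔ dezaB G b x ∩ G.neighborFinset x = dezaB G b x :=
    inter_eq_left.symm
  rw [hB_iff, IsTypeA, IsTypeC, ← card_eq_zero]
  set s := dezaB G b x ∩ G.neighborFinset x
  rcases Nat.lt_or_ge 1 s.card with h | h
  · have hs : s = dezaB G b x := hB_iff.mp (hB h)
    exact Or.inr (Or.inl ⟨by omega, hs, by omega⟩)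
  · have hne : s ≠ dezaB G b x := fun hs => by rw [hs] at h; omega
    rcases Nat.le_one_iff_eq_zero_or_eq_one.mp h with h | h
    · exact Or.inl ⟨h, hne, by omega⟩
    · exact Or.inr (Or.inr ⟨by omega, hne, h⟩)

end

theorem stmt4 {V : Type u} [Fintype V] [DecidableEq V] (G : SimpleGraph V)
    [DecidableRel G.Adj] (n k b a : ℕ)
    (hG : IsStrictlyDezaGraph G n k b a) (hk : k = b + 1)
    (hβ : ∀ v : V, 1 < (dezaB G b v).card) :
    ∀ x : V,
      (IsTypeA G b x ∧ ¬ IsTypeB G b x ∧ ¬ IsTypeC G b x) ∨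
      (¬ IsTypeA G b x ∧ IsTypeB G b x ∧ ¬ IsTypeC G b x) ∨
      (¬ IsTypeA G b x ∧ ¬ IsTypeB G b x ∧ IsTypeC G b x) := by
  obtain ⟨⟨-, -, hreg, -, -⟩, -⟩ := hG
  subst hk
  exact fun x => isTypeA_or_isTypeB_or_isTypeC (hβ x) (isTypeB_of_one_lt_card_inter hreg)
end

section
/- Let Γ be a strictly Deza graph with parameters (n, k, b, a) with k = b + 1 and β(v) > 1 for every vertex v. Then b > a > 0, and α(v) > 0 for every vertex v. -/
/-!
If `a = b`, the graph would be strongly regular with `λ = μ = b`. If `A(v) = ∅`, then `v` shares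
`k - 1` neighbours with every other vertex; in a `k`-regular graph of diameter at most `2` this
forces every vertex to be adjacent to `v` and, in turn, all vertices to be pairwise adjacent,
which contradicts the existence of two vertices at distance `2`. Finally, if `a = 0`, every vertex
`p` has a neighbour `y` with no common neighbour, so every other neighbour `q` of `p` shares at most
`k - 2 < b` neighbours with `p`; hence adjacent vertices have `0` and non-adjacent vertices `b`
common neighbours, and the graph would be strongly regular with parameters `(n, k, 0, b)`.
-/

open Finset SimpleGraph

universe u v

theorem exists_adj_adj_of_not_adj {V : Type*} {G : SimpleGraph V} (hconn : G.Connected)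
    (hdiam : ∀ x y, G.dist x y ≤ 2) {x y : V} (hne : x ≠ y) (hna : ¬ G.Adj x y) : ∃ w, G.Adj x w ∧ G.Adj y w := by
  have hdist : G.dist x y = 2 :=
    le_antisymm (hdiam x y) (hconn.one_lt_dist_of_ne_of_not_adj hne hna)
  have hedist : G.edist x y = 2 := by rw [← (hconn x y).coe_dist_eq_edist, hdist]; rfl
  obtain ⟨w, hw⟩ := (edist_eq_two_iff.mp hedist).2.2
  exact ⟨w, G.mem_commonNeighbors.mp hw⟩

section CommonNbrs

variable {V : Type*} [Fintype V] [DecidableEq V] {G : SimpleGraph V} [DecidableRel G.Adj]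

theorem card_commonNeighbors_eq_commonNbrs (x y : V) :
    Fintype.card (G.commonNeighbors x y) = commonNbrs G x y := by
  rw [commonNbrs, ← Set.toFinset_card]
  congr 1
  ext w
  simp [mem_commonNeighbors]

theorem commonNbrs_comm (x y : V) : commonNbrs G x y = commonNbrs G y x := by
  rw [commonNbrs, commonNbrs, inter_comm]

theorem isSRGWith_of_commonNbrs {n k ℓ μ : ℕ} (hcard : Fintype.card V = n)
    (hreg : G.IsRegularOfDegree k) (hadj : ∀ x y, G.Adj x y → commonNbrs G x y = ℓ)
    (hnadj : ∀ x y, x ≠ y → ¬ G.Adj x y → commonNbrs G x y = μ) :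
    G.IsSRGWith n k ℓ μ where
  card := hcard
  regular := hreg
  of_adj x y h := by rw [card_commonNeighbors_eq_commonNbrs, hadj x y h]
  of_not_adj x y hne h := by rw [card_commonNeighbors_eq_commonNbrs, hnadj x y hne h]

theorem commonNbrs_pos_of_not_adj (hconn : G.Connected) (hdiam : ∀ x y, G.dist x y ≤ 2)
    {x y : V} (hne : x ≠ y) (hna : ¬ G.Adj x y) : 0 < commonNbrs G x y := by
  obtain ⟨w, hxw, hyw⟩ := exists_adj_adj_of_not_adj hconn hdiam hne hna
  exact card_pos.mpr ⟨w, by simpa using And.intro hxw hyw⟩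

variable {k : ℕ}

theorem adj_of_commonNbrs_add_one_eq (hreg : G.IsRegularOfDegree k) {x v y : V}
    (hxv : G.Adj x v) (hc : commonNbrs G x v + 1 = k) (hxy : G.Adj x y) (hyv : y ≠ v) :
    G.Adj v y := by
  have hsub : G.neighborFinset x ∩ G.neighborFinset v ⊆ (G.neighborFinset x).erase v :=
    fun w hw => by
      obtain ⟨hxw, hvw⟩ := mem_inter.mp hw
      exact mem_erase.mpr ⟨((G.mem_neighborFinset v w).mp hvw).ne', hxw⟩
  have heq := eq_of_subset_of_card_le hsub <| by
    rw [card_erase_of_mem (by simpa), card_neighborFinset_eq_degree, hreg.degree_eq]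
    exact (Nat.sub_eq_of_eq_add hc.symm).le
  have hy : y ∈ (G.neighborFinset x).erase v := mem_erase.mpr ⟨hyv, by simpa⟩
  rw [← heq] at hy
  simpa using (mem_inter.mp hy).2

theorem eq_top_of_forall_commonNbrs_add_one_eq (hreg : G.IsRegularOfDegree k)
    (hconn : G.Connected) (hdiam : ∀ x y, G.dist x y ≤ 2) {v : V}
    (hv : ∀ u, u ≠ v → commonNbrs G u v + 1 = k) : G = ⊤ := by
  have hadj_v : ∀ u, u ≠ v → G.Adj v u := fun u hu => by
    by_contra hna
    obtain ⟨x, hvx, hux⟩ := exists_adj_adj_of_not_adj hconn hdiam hu.symm hna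
    exact hna (adj_of_commonNbrs_add_one_eq hreg hvx.symm (hv x hvx.ne') hux.symm hu)
  ext x y
  refine ⟨Adj.ne, fun hxy => ?_⟩
  by_cases hx : x = v
  · exact hx ▸ hadj_v y (hx ▸ hxy).symm
  by_cases hy : y = v
  · exact (hy ▸ hadj_v x (hy ▸ hxy)).symm
  refine adj_of_commonNbrs_add_one_eq hreg (hadj_v x hx) ?_ (hadj_v y hy) (Ne.symm hxy)
  rw [commonNbrs_comm]
  exact hv x hx

theorem commonNbrs_add_two_le (hreg : G.IsRegularOfDegree k) {p q y : V}
    (hpq : G.Adj p q) (hpy : G.Adj p y) (hqy : q ≠ y) (hy : commonNbrs G y p = 0) :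
    commonNbrs G p q + 2 ≤ k := by
  have hsub : G.neighborFinset p ∩ G.neighborFinset q ⊆
      ((G.neighborFinset p).erase y).erase q := fun w hw => by
    obtain ⟨hpw, hqw⟩ := mem_inter.mp hw
    rw [mem_neighborFinset] at hpw hqw
    refine mem_erase.mpr ⟨hqw.ne', mem_erase.mpr ⟨?_, by simpa⟩⟩
    rintro rfl
    have : q ∈ G.neighborFinset w ∩ G.neighborFinset p := by simpa using ⟨hqw.symm, hpq⟩
    rw [card_eq_zero.mp hy] at this
    exact notMem_empty q this
  have hcard := card_le_card hsub
  have hq := card_erase_add_one (mem_erase.mpr ⟨hqy, (G.mem_neighborFinset p q).mpr hpq⟩)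
  have hy := card_erase_add_one ((G.mem_neighborFinset p y).mpr hpy)
  rw [card_neighborFinset_eq_degree, hreg.degree_eq] at hy
  unfold commonNbrs
  omega

end CommonNbrs

theorem mem_dezaA {V : Type*} [Fintype V] [DecidableEq V] {G : SimpleGraph V}
    [DecidableRel G.Adj] {a : ℕ} {u v : V} : u ∈ dezaA G a v ↔ u ≠ v ∧ commonNbrs G u v = a := by
  simp [dezaA]

namespace IsStrictlyDezaGraph

variable {V : Type*} [Fintype V] [DecidableEq V] {G : SimpleGraph V} [DecidableRel G.Adj]
  {n k b a : ℕ}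

theorem a_lt_b (hG : IsStrictlyDezaGraph G n k b a) : a < b := by
  obtain ⟨⟨-, hcard, hreg, hab, hdich⟩, -, -, -, hnsrg⟩ := hG
  refine lt_of_le_of_ne hab fun hab => hnsrg ⟨b, b, ?_⟩
  have hall : ∀ x y, x ≠ y → commonNbrs G x y = b := fun x y hne =>
    (hdich x y hne).elim id (· ▸ hab)
  exact isSRGWith_of_commonNbrs hcard hreg (fun x y h => hall x y h.ne)
    fun x y hne _ => hall x y hne

theorem dezaA_nonempty (hG : IsStrictlyDezaGraph G n k b a) (hk : k = b + 1) (v : V) :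
    (dezaA G a v).Nonempty := by
  obtain ⟨⟨-, -, hreg, -, hdich⟩, hconn, hdiam, ⟨x, y, hxy⟩, -⟩ := hG
  by_contra hA
  have hv : ∀ u, u ≠ v → commonNbrs G u v + 1 = k := fun u hu => by
    rcases hdich u v hu with hb | ha
    · omega
    · exact absurd ⟨u, mem_dezaA.mpr ⟨hu, ha⟩⟩ hA
  have htop := eq_top_of_forall_commonNbrs_add_one_eq hreg hconn hdiam hv
  have hne : x ≠ y := by rintro rfl; simp at hxy
  rw [dist_eq_one_iff_adj.mpr (by rw [htop]; exact hne)] at hxy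
  omega

theorem a_pos (hG : IsStrictlyDezaGraph G n k b a) (hk : k = b + 1) : 0 < a := by
  have hA := hG.dezaA_nonempty hk
  obtain ⟨⟨-, hcard, hreg, -, hdich⟩, hconn, hdiam, -, hnsrg⟩ := hG
  by_contra! ha
  obtain rfl : a = 0 := by omega
  refine hnsrg ⟨0, b, isSRGWith_of_commonNbrs hcard hreg (fun p q hpq => ?_) fun p q hne hna => ?_⟩
  · obtain ⟨y, hy⟩ := hA p
    obtain ⟨hyp, hy⟩ := mem_dezaA.mp hy
    have hpy : G.Adj p y := by
      by_contra hna
      have := commonNbrs_pos_of_not_adj hconn hdiam hyp (hna ∘ Adj.symm)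
      omega
    by_cases hqy : q = y
    · rw [hqy, commonNbrs_comm, hy]
    have := commonNbrs_add_two_le hreg hpq hpy hqy hy
    rcases hdich p q hpq.ne with h | h <;> omega
  · have := commonNbrs_pos_of_not_adj hconn hdiam hne hna
    rcases hdich p q hne with h | h <;> omega

end IsStrictlyDezaGraph

theorem stmt5_general {V : Type u} [Fintype V] [DecidableEq V] (G : SimpleGraph V)
    [DecidableRel G.Adj] (n k b a : ℕ)
    (hG : IsStrictlyDezaGraph G n k b a) (hk : k = b + 1) :
    a < b ∧ 0 < a ∧ ∀ w : V, 0 < (dezaA G a w).card :=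
  ⟨hG.a_lt_b, hG.a_pos hk, fun w => (hG.dezaA_nonempty hk w).card_pos⟩

theorem stmt5 {V : Type u} [Fintype V] [DecidableEq V] (G : SimpleGraph V)
    [DecidableRel G.Adj] (n k b a : ℕ)
    (hG : IsStrictlyDezaGraph G n k b a) (hk : k = b + 1)
    (hβ : ∀ v : V, 1 < (dezaB G b v).card) :
    a < b ∧ 0 < a ∧ ∀ w : V, 0 < (dezaA G a w).card :=
  stmt5_general G n k b a hG hk
end

section
/- Let Γ be a strictly Deza graph with parameters (n, k, b, a) with k = b + 1 and β(v) > 1 for every vertex v. Let x be a vertex of type (A). If there exist two distinct vertices x₁, x₂ ∈ B(x) such that N(x) ∩ N(x₁) = N(x) ∩ N(x₂), then N(x) ∩ N(x₁) = N(x) ∩ N(xᵢ) for every vertex xᵢ ∈ B(x). -/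
open Finset SimpleGraph

universe u v

/-!
Since `k = b + 1`, every `u ∈ B(x)` arises from `N(x)` by exchanging one vertex:
`N(x) \ N(u) = {y_u}` and `N(u) \ N(x) = {w_u}`, and the hypothesis says `y_{x₁} = y_{x₂} =: y`.
If some `xᵢ ∈ B(x)` had `y_{xᵢ} ≠ y`, then `y_{xᵢ}` would be adjacent to `x`, `x₁`, `x₂`, none of
which lies in `N(x)` (type (A)), so `|N(y_{xᵢ}) ∩ N(x)| ≤ b - 2` forces `a ≤ b - 2`. On the other
hand `w_{x₁} ≠ w_{x₂}`, since otherwise `x₁` and `x₂` would have `b + 1` common neighbours; so one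
of them, `u`, also has `w_u ≠ w_{xᵢ}`, and then `N(u) ∩ N(xᵢ) = N(x) \ {y, y_{xᵢ}}` has `b - 1`
elements, which is neither `a` nor `b`.
-/

namespace Finset

variable {α : Type*} [DecidableEq α] {s t r : Finset α} {y y' w w' : α} {m : ℕ}

theorem exists_sdiff_eq_singleton_of_card_inter (hs : #s = m + 1) (h : #(s ∩ t) = m) :
    ∃ y, s \ t = {y} :=
  card_eq_one.mp (by have := card_inter_add_card_sdiff s t; omega)

theorem disjoint_sdiff_of_inter_eq (h : s ∩ t = s ∩ r) (hcard : #(t ∩ r) ≤ #(s ∩ t)) :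
    Disjoint (t \ s) (r \ s) := by
  refine disjoint_left.mpr fun z hzt hzr => ?_
  have hsub : insert z (s ∩ t) ⊆ t ∩ r := by
    refine insert_subset (mem_inter.mpr ⟨(mem_sdiff.mp hzt).1, (mem_sdiff.mp hzr).1⟩) ?_
    intro v hv
    exact mem_inter.mpr ⟨(mem_inter.mp hv).2, (mem_inter.mp (h ▸ hv)).2⟩
  have := card_le_card hsub
  rw [card_insert_of_notMem fun hz => (mem_sdiff.mp hzt).2 (mem_inter.mp hz).1] at this
  omega

theorem inter_eq_sdiff_pair_of_sdiff_eq_singleton (hy : s \ t = {y}) (hw : t \ s = {w})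
    (hy' : s \ r = {y'}) (hw' : r \ s = {w'}) (hww : w ≠ w') : t ∩ r = s \ {y, y'} := by
  ext z
  have h₁ := Finset.ext_iff.mp hy z
  have h₂ := Finset.ext_iff.mp hw z
  have h₃ := Finset.ext_iff.mp hy' z
  have h₄ := Finset.ext_iff.mp hw' z
  simp only [mem_sdiff, mem_singleton] at h₁ h₂ h₃ h₄
  simp only [mem_inter, mem_sdiff, mem_insert, mem_singleton]
  grind

end Finset

section Deza

variable {V : Type u} [Fintype V] [DecidableEq V] {G : SimpleGraph V} [DecidableRel G.Adj]
  {a b : ℕ} {x x₁ x₂ y u v : V}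

theorem mem_dezaB : u ∈ dezaB G b x ↔ u ≠ x ∧ commonNbrs G u x = b := by
  simp [dezaB]

theorem IsTypeA.not_adj (hx : IsTypeA G b x) (hu : u ∈ dezaB G b x) : ¬ G.Adj x u :=
  fun hadj => (eq_empty_iff_forall_notMem.mp hx) u
    (mem_inter.mpr ⟨hu, (mem_neighborFinset G x u).mpr hadj⟩)

theorem card_inter_neighborFinset_of_mem_dezaB (hu : u ∈ dezaB G b x) :
    #(G.neighborFinset x ∩ G.neighborFinset u) = b := by
  rw [inter_comm]
  exact (mem_dezaB.mp hu).2

theorem exists_neighborFinset_sdiff_eq_singleton (hreg : G.IsRegularOfDegree (b + 1))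
    (hu : u ∈ dezaB G b x) :
    ∃ y, G.neighborFinset x \ G.neighborFinset u = {y} :=
  exists_sdiff_eq_singleton_of_card_inter (hreg x) (card_inter_neighborFinset_of_mem_dezaB hu)

theorem exists_sdiff_neighborFinset_eq_singleton (hreg : G.IsRegularOfDegree (b + 1))
    (hu : u ∈ dezaB G b x) :
    ∃ w, G.neighborFinset u \ G.neighborFinset x = {w} :=
  exists_sdiff_eq_singleton_of_card_inter (hreg u)
    (by rw [inter_comm]; exact card_inter_neighborFinset_of_mem_dezaB hu)

theorem commonNbrs_add_one_eq_of_mem_dezaB (hreg : G.IsRegularOfDegree (b + 1))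
    (hu : u ∈ dezaB G b x) (hv : v ∈ dezaB G b x)
    (hy : G.neighborFinset x \ G.neighborFinset u ≠ G.neighborFinset x \ G.neighborFinset v)
    (hw : G.neighborFinset u \ G.neighborFinset x ≠ G.neighborFinset v \ G.neighborFinset x) :
    commonNbrs G u v + 1 = b := by
  obtain ⟨yu, hyu⟩ := exists_neighborFinset_sdiff_eq_singleton hreg hu
  obtain ⟨yv, hyv⟩ := exists_neighborFinset_sdiff_eq_singleton hreg hv
  obtain ⟨wu, hwu⟩ := exists_sdiff_neighborFinset_eq_singleton hreg hu
  obtain ⟨wv, hwv⟩ := exists_sdiff_neighborFinset_eq_singleton hreg hv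
  rw [hyu, hyv, Ne, singleton_inj] at hy
  rw [hwu, hwv, Ne, singleton_inj] at hw
  have hpair : {yu, yv} ⊆ G.neighborFinset x := by
    rw [insert_subset_iff, singleton_subset_iff]
    exact ⟨sdiff_subset (hyu ▸ mem_singleton_self yu),
      sdiff_subset (hyv ▸ mem_singleton_self yv)⟩
  have hcard := card_le_card hpair
  rw [card_pair hy, card_neighborFinset_eq_degree, hreg x] at hcard
  rw [commonNbrs, inter_eq_sdiff_pair_of_sdiff_eq_singleton hyu hwu hyv hwv hw,
    card_sdiff_of_subset hpair, card_pair hy, card_neighborFinset_eq_degree, hreg x]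
  omega

theorem commonNbrs_add_two_le_of_mem_dezaB (hreg : G.IsRegularOfDegree (b + 1))
    (hx : IsTypeA G b x) (h₁ : x₁ ∈ dezaB G b x) (h₂ : x₂ ∈ dezaB G b x) (h₁₂ : x₁ ≠ x₂)
    (hyx : G.Adj x y) (hy₁ : G.Adj x₁ y) (hy₂ : G.Adj x₂ y) :
    commonNbrs G y x + 2 ≤ b := by
  have hsub : {x, x₁, x₂} ⊆ G.neighborFinset y \ G.neighborFinset x := by
    simp only [insert_subset_iff, singleton_subset_iff, mem_sdiff, mem_neighborFinset]
    exact ⟨⟨hyx.symm, G.loopless.irrefl x⟩, ⟨hy₁.symm, hx.not_adj h₁⟩, hy₂.symm, hx.not_adj h₂⟩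
  have hcard := card_le_card hsub
  rw [card_insert_of_notMem (by simp [(mem_dezaB.mp h₁).1.symm, (mem_dezaB.mp h₂).1.symm]),
    card_pair h₁₂] at hcard
  have := card_inter_add_card_sdiff (G.neighborFinset y) (G.neighborFinset x)
  rw [card_neighborFinset_eq_degree, hreg y] at this
  rw [commonNbrs]
  omega

theorem neighborFinset_sdiff_eq_of_mem_dezaB (hreg : G.IsRegularOfDegree (b + 1))
    (hdeza : ∀ u v, u ≠ v → commonNbrs G u v = b ∨ commonNbrs G u v = a) (hab : a ≤ b)
    (hx : IsTypeA G b x) (h₁ : x₁ ∈ dezaB G b x) (h₂ : x₂ ∈ dezaB G b x) (h₁₂ : x₁ ≠ x₂)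
    (heq : G.neighborFinset x ∩ G.neighborFinset x₁ = G.neighborFinset x ∩ G.neighborFinset x₂)
    (hu : u ∈ dezaB G b x) :
    G.neighborFinset x \ G.neighborFinset x₁ = G.neighborFinset x \ G.neighborFinset u := by
  obtain ⟨y, hy₁⟩ := exists_neighborFinset_sdiff_eq_singleton hreg h₁
  have hy₂ : G.neighborFinset x \ G.neighborFinset x₂ = {y} :=
    sdiff_eq_sdiff_iff_inter_eq_inter.mpr heq ▸ hy₁
  obtain ⟨y', hy'⟩ := exists_neighborFinset_sdiff_eq_singleton hreg hu
  rw [hy₁, hy']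
  by_contra hne
  have hy'x : y' ∈ G.neighborFinset x \ G.neighborFinset u := hy' ▸ mem_singleton_self y'
  have hadj : ∀ v, G.neighborFinset x \ G.neighborFinset v = {y} → G.Adj v y' := by
    intro v hv
    by_contra hnadj
    have : y' ∈ G.neighborFinset x \ G.neighborFinset v :=
      mem_sdiff.mpr ⟨(mem_sdiff.mp hy'x).1, (G.mem_neighborFinset v y').not.mpr hnadj⟩
    rw [hv, mem_singleton] at this
    exact hne (by rw [this])
  have hxy' : G.Adj x y' := (G.mem_neighborFinset x y').mp (mem_sdiff.mp hy'x).1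
  have hy'_common := commonNbrs_add_two_le_of_mem_dezaB hreg hx h₁ h₂ h₁₂ hxy'
    (hadj x₁ hy₁) (hadj x₂ hy₂)
  have hw₁₂ :
      G.neighborFinset x₁ \ G.neighborFinset x ≠ G.neighborFinset x₂ \ G.neighborFinset x := by
    intro h
    have hdisj := disjoint_sdiff_of_inter_eq heq (by
      rw [card_inter_neighborFinset_of_mem_dezaB h₁]
      rcases hdeza x₁ x₂ h₁₂ with h | h <;> rw [commonNbrs] at h <;> omega)
    obtain ⟨w, hw⟩ := exists_sdiff_neighborFinset_eq_singleton hreg h₂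
    rw [h, disjoint_self_iff_empty, hw] at hdisj
    exact singleton_ne_empty w hdisj
  obtain ⟨v, hv, hvy, hvw⟩ : ∃ v ∈ dezaB G b x, G.neighborFinset x \ G.neighborFinset v = {y} ∧
      G.neighborFinset v \ G.neighborFinset x ≠ G.neighborFinset u \ G.neighborFinset x := by
    by_cases h :
        G.neighborFinset x₁ \ G.neighborFinset x = G.neighborFinset u \ G.neighborFinset x
    · exact ⟨x₂, h₂, hy₂, fun h' => hw₁₂ (h.trans h'.symm)⟩
    · exact ⟨x₁, h₁, hy₁, h⟩
  have hvu : v ≠ u := by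
    rintro rfl
    exact hne (hvy.symm.trans hy')
  have hv_common :=
    commonNbrs_add_one_eq_of_mem_dezaB hreg hv hu (by rw [hvy, hy']; exact hne) hvw
  rcases hdeza y' x hxy'.ne' with h | h <;>
    rcases hdeza v u hvu with h' | h' <;> omega

end Deza

theorem stmt6_general {V : Type u} [Fintype V] [DecidableEq V] (G : SimpleGraph V)
    [DecidableRel G.Adj] (n k b a : ℕ)
    (hG : IsStrictlyDezaGraph G n k b a) (hk : k = b + 1) :
    ∀ x x1 x2 : V, IsTypeA G b x → x1 ∈ dezaB G b x → x2 ∈ dezaB G b x → x1 ≠ x2 →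
      G.neighborFinset x ∩ G.neighborFinset x1 =
        G.neighborFinset x ∩ G.neighborFinset x2 →
      ∀ xi ∈ dezaB G b x,
        G.neighborFinset x ∩ G.neighborFinset x1 =
          G.neighborFinset x ∩ G.neighborFinset xi := by
  obtain ⟨⟨-, -, hreg, hab, hdeza⟩, -⟩ := hG
  subst hk
  intro x x1 x2 hx h1 h2 h12 heq xi hi
  exact sdiff_eq_sdiff_iff_inter_eq_inter.mp
    (neighborFinset_sdiff_eq_of_mem_dezaB hreg hdeza hab hx h1 h2 h12 heq hi)

theorem stmt6 {V : Type u} [Fintype V] [DecidableEq V] (G : SimpleGraph V)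
    [DecidableRel G.Adj] (n k b a : ℕ)
    (hG : IsStrictlyDezaGraph G n k b a) (hk : k = b + 1)
    (hβ : ∀ v : V, 1 < (dezaB G b v).card) :
    ∀ x x1 x2 : V, IsTypeA G b x → x1 ∈ dezaB G b x → x2 ∈ dezaB G b x → x1 ≠ x2 →
      G.neighborFinset x ∩ G.neighborFinset x1 =
        G.neighborFinset x ∩ G.neighborFinset x2 →
      ∀ xi ∈ dezaB G b x,
        G.neighborFinset x ∩ G.neighborFinset x1 =
          G.neighborFinset x ∩ G.neighborFinset xi :=
  stmt6_general G n k b a hG hk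
end

section
/- Let Γ be a strictly Deza graph with parameters (n, k, b, a) with k = b + 1 and β(v) > 1 for every vertex v, and let x be a vertex of type (A) with β = β(x). Then one of the following two statements holds: (1) there is a unique vertex y ∈ N(x) such that N(x) \ N(xᵢ) = {y} for every xᵢ ∈ B(x), and the union over xᵢ ∈ B(x) of the sets N(xᵢ) \ N(x) has exactly β elements; (2) there is a unique vertex z ∉ N(x) ∪ {x} such that N(xᵢ) \ N(x) = {z} for every xᵢ ∈ B(x), and the union over xᵢ ∈ B(x) of the sets N(x) \ N(xᵢ) has exactly β elements. -/
open Finset SimpleGraph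

universe u v

/-!
For `xᵢ ∈ B(x)` the neighbourhoods `N(x)` and `N(xᵢ)` share `b = k - 1` vertices, so
`N(x) \ N(xᵢ) = {yᵢ}` and `N(xᵢ) \ N(x) = {zᵢ}`. Distinct members of `B(x)` have distinct
neighbourhoods, so the pairs `(yᵢ, zᵢ)` are distinct. Two members with `yᵢ ≠ yⱼ` and `zᵢ ≠ zⱼ`
would have `k - 2` common neighbours, forcing `a = k - 2`. For `k ≥ 3` a common neighbour `u` of
`x, xᵢ, xⱼ` then has `a` common neighbours with `x` besides its neighbours `x, xᵢ, xⱼ`, which is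
too many; for `k = 2` the graph is a pentagon, which is strongly regular. Hence any two members
agree in `y` or in `z`, and then all of them agree in the same coordinate.
-/

namespace Finset

variable {α : Type*}

lemma disjoint_of_card_eq_one_of_ne {s t : Finset α} (hs : #s = 1) (ht : #t = 1) (hst : s ≠ t) :
    Disjoint s t := by
  obtain ⟨a, rfl⟩ := card_eq_one.1 hs
  obtain ⟨b, rfl⟩ := card_eq_one.1 ht
  exact disjoint_singleton.2 fun hab => hst (hab ▸ rfl)

lemma eq_of_sdiff_eq_of_sdiff_eq [DecidableEq α] {s t₁ t₂ : Finset α} (h₁ : s \ t₁ = s \ t₂)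
    (h₂ : t₁ \ s = t₂ \ s) : t₁ = t₂ := by
  ext w
  have h₁w := congrArg (w ∈ ·) h₁
  have h₂w := congrArg (w ∈ ·) h₂
  simp only [mem_sdiff, eq_iff_iff] at h₁w h₂w
  tauto

lemma inter_inter_eq_sdiff_union_sdiff [DecidableEq α] (s t₁ t₂ : Finset α) :
    s ∩ t₁ ∩ t₂ = s \ (s \ t₁ ∪ s \ t₂) := by
  ext w
  simp only [mem_inter, mem_sdiff, mem_union]
  tauto

lemma inter_inter_eq_inter_of_disjoint [DecidableEq α] {s t₁ t₂ : Finset α}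
    (h : Disjoint (t₁ \ s) (t₂ \ s)) : s ∩ t₁ ∩ t₂ = t₁ ∩ t₂ := by
  ext w
  have hw : w ∈ t₁ \ s → w ∉ t₂ \ s := fun hw => disjoint_left.1 h hw
  simp only [mem_inter, mem_sdiff] at hw ⊢
  tauto

lemma card_biUnion_eq_card_of_injOn [DecidableEq α] {ι : Type*} {S : Finset ι} {H : ι → Finset α}
    (hH : ∀ i ∈ S, #(H i) = 1) (hinj : Set.InjOn H S) : #(S.biUnion H) = #S := by
  have hdisj : (S : Set ι).PairwiseDisjoint H := fun i hi j hj hij =>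
    disjoint_of_card_eq_one_of_ne (hH i hi) (hH j hj) fun h => hij (hinj hi hj h)
  rw [card_biUnion hdisj, sum_congr rfl hH, card_eq_sum_ones]

lemma existsUnique_of_forall_eq_singleton {ι : Type*} {S : Finset ι} (hS : S.Nonempty)
    {F : ι → Finset α} {P : α → Prop} {y : α} (hy : P y) (hF : ∀ i ∈ S, F i = {y}) :
    ∃! y, P y ∧ ∀ i ∈ S, F i = {y} := by
  obtain ⟨i, hi⟩ := hS
  exact ⟨y, ⟨hy, hF⟩, fun y' hy' => singleton_injective ((hy'.2 i hi).symm.trans (hF i hi))⟩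

end Finset

lemma forall_eq_or_forall_eq_of_forall_eq_or_eq {ι β γ : Type*} {s : Set ι} {f : ι → β}
    {g : ι → γ} (h : ∀ i ∈ s, ∀ j ∈ s, f i = f j ∨ g i = g j) :
    (∀ i ∈ s, ∀ j ∈ s, f i = f j) ∨ (∀ i ∈ s, ∀ j ∈ s, g i = g j) := by
  by_contra! ⟨⟨i₁, hi₁, i₂, hi₂, hf⟩, ⟨j, hj, j', hj', hg'⟩⟩
  have hg : ∀ i ∈ s, g i = g i₁ := fun i hi => by
    by_contra hgi
    have h₁ := (h i hi i₁ hi₁).resolve_right hgi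
    have h₂ := (h i hi i₂ hi₂).resolve_right fun hg₂ =>
      hgi (hg₂.trans ((h i₁ hi₁ i₂ hi₂).resolve_left hf).symm)
    exact hf (h₁.symm.trans h₂)
  exact hg' ((hg j hj).trans (hg j' hj').symm)

namespace SimpleGraph

variable {V : Type*} {G : SimpleGraph V}

lemma Connected.commonNeighbors_nonempty {v w : V} (hconn : G.Connected) (hd : G.dist v w ≤ 2)
    (hne : v ≠ w) (hadj : ¬ G.Adj v w) : (G.commonNeighbors v w).Nonempty := by
  by_contra h
  have h2 := two_lt_edist_iff.2 ⟨hne, hadj, Set.not_nonempty_iff_eq_empty.1 h⟩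
  rw [← (hconn v w).coe_dist_eq_edist] at h2
  exact absurd hd (by exact_mod_cast h2.not_ge)

variable [Fintype V] [DecidableEq V] [DecidableRel G.Adj]

lemma card_commonNeighbors_eq_commonNbrs (v w : V) :
    Fintype.card (G.commonNeighbors v w) = commonNbrs G v w := by
  rw [← Set.toFinset_card, commonNbrs]
  congr 1
  ext u
  simp [mem_commonNeighbors]

lemma IsRegularOfDegree.eq_or_eq_of_adj (hreg : G.IsRegularOfDegree 2) {v u w s : V}
    (hu : G.Adj v u) (hw : G.Adj v w) (huw : u ≠ w) (hs : G.Adj v s) : s = u ∨ s = w := by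
  have hN : G.neighborFinset v = {u, w} := by
    refine (eq_of_subset_of_card_le ?_ ?_).symm
    · simp [insert_subset_iff, hu, hw]
    · rw [card_neighborFinset_eq_degree, hreg v, card_pair huw]
  simpa [hN] using (mem_neighborFinset G v s).2 hs

lemma eq_or_eq_or_eq_of_triangle (hreg : G.IsRegularOfDegree 2) (hconn : G.Connected)
    {v w t : V} (hdist : ∀ u, G.dist v u ≤ 2) (hvw : G.Adj v w) (hvt : G.Adj v t)
    (hwt : G.Adj w t) (u : V) : u = v ∨ u = w ∨ u = t := by
  rcases eq_or_ne u v with huv | huv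
  · exact Or.inl huv
  by_cases hadj : G.Adj v u
  · exact Or.inr (hreg.eq_or_eq_of_adj hvw hvt hwt.ne hadj)
  obtain ⟨m, hvm, hum⟩ := hconn.commonNeighbors_nonempty (hdist u) huv.symm hadj
  rcases hreg.eq_or_eq_of_adj hvw hvt hwt.ne hvm with rfl | rfl
  · have := hreg.eq_or_eq_of_adj hvw.symm hwt hvt.ne hum.symm
    tauto
  · have := hreg.eq_or_eq_of_adj hvt.symm hwt.symm hvw.ne hum.symm
    tauto

lemma isSRGWith_of_isRegularOfDegree_two {n : ℕ} (hn : Fintype.card V = n)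
    (hreg : G.IsRegularOfDegree 2) (hconn : G.Connected) (hdist : ∀ v w, G.dist v w ≤ 2)
    (hle : ∀ v w, v ≠ w → commonNbrs G v w ≤ 1) {x x' : V} (hne : x ≠ x')
    (hnadj : ¬ G.Adj x x') : G.IsSRGWith n 2 0 1 where
  card := hn
  regular := hreg
  of_adj v w hvw := by
    by_contra h
    obtain ⟨t, hvt, hwt⟩ := Fintype.card_pos_iff.1 (Nat.pos_of_ne_zero h)
    have hmem := eq_or_eq_or_eq_of_triangle hreg hconn (hdist v) hvw hvt hwt
    rcases hmem x with rfl | rfl | rfl <;> rcases hmem x' with rfl | rfl | rfl <;>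
      simp_all [adj_comm]
  of_not_adj v w hvw hnvw :=
    le_antisymm ((card_commonNeighbors_eq_commonNbrs (G := G) v w).trans_le (hle v w hvw))
      (Fintype.card_pos_iff.2 (hconn.commonNeighbors_nonempty (hdist v w) hvw hnvw).to_subtype)

variable {n k b a : ℕ} {x xi xj u : V}

lemma mem_dezaB : xi ∈ dezaB G b x ↔ xi ≠ x ∧ commonNbrs G xi x = b := by
  simp [dezaB]

lemma not_adj_of_mem_dezaB (hA : IsTypeA G b x) (hxi : xi ∈ dezaB G b x) : ¬ G.Adj x xi := by
  intro h
  have hA' : dezaB G b x ∩ G.neighborFinset x = ∅ := hA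
  exact notMem_empty xi (hA' ▸ mem_inter.2 ⟨hxi, (mem_neighborFinset _ _ _).2 h⟩)

lemma card_sdiff_neighborFinset_eq_one (hreg : G.IsRegularOfDegree (b + 1))
    (hxi : xi ∈ dezaB G b x) :
    #(G.neighborFinset x \ G.neighborFinset xi) = 1 ∧
      #(G.neighborFinset xi \ G.neighborFinset x) = 1 := by
  have hb := (mem_dezaB.1 hxi).2
  rw [commonNbrs] at hb
  rw [card_sdiff, card_sdiff, inter_comm (G.neighborFinset x), hb, card_neighborFinset_eq_degree,
    card_neighborFinset_eq_degree, hreg x, hreg xi]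
  omega

lemma card_inter_inter_neighborFinset_add_two (hreg : G.IsRegularOfDegree (b + 1))
    (hxi : xi ∈ dezaB G b x) (hxj : xj ∈ dezaB G b x)
    (hy : G.neighborFinset x \ G.neighborFinset xi ≠ G.neighborFinset x \ G.neighborFinset xj) :
    #(G.neighborFinset x ∩ G.neighborFinset xi ∩ G.neighborFinset xj) + 2 = b + 1 := by
  obtain ⟨hi, -⟩ := card_sdiff_neighborFinset_eq_one hreg hxi
  obtain ⟨hj, -⟩ := card_sdiff_neighborFinset_eq_one hreg hxj
  have hlost : #(G.neighborFinset x \ G.neighborFinset xi ∪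
      G.neighborFinset x \ G.neighborFinset xj) = 2 := by
    rw [card_union_of_disjoint (disjoint_of_card_eq_one_of_ne hi hj hy), hi, hj]
  rw [inter_inter_eq_sdiff_union_sdiff, ← hlost,
    card_sdiff_add_card_eq_card (union_subset sdiff_subset sdiff_subset),
    card_neighborFinset_eq_degree, hreg x]

lemma notMem_insert_neighborFinset_of_mem_sdiff {z : V} (hA : IsTypeA G b x)
    (hxi : xi ∈ dezaB G b x) (hz : z ∈ G.neighborFinset xi \ G.neighborFinset x) :
    z ∉ insert x (G.neighborFinset x) := by
  rw [mem_sdiff, mem_neighborFinset] at hz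
  rw [mem_insert, not_or]
  exact ⟨by rintro rfl; exact not_adj_of_mem_dezaB hA hxi hz.1.symm, hz.2⟩

namespace IsDezaGraph

lemma commonNbrs_eq_of_adj (hD : IsDezaGraph G n k b a) (hA : IsTypeA G b x) (hu : G.Adj x u) :
    commonNbrs G u x = a :=
  (hD.2.2.2.2 u x hu.ne.symm).resolve_left fun h =>
    not_adj_of_mem_dezaB hA (mem_dezaB.2 ⟨hu.ne.symm, h⟩) hu

/-- `u` has the `a` common neighbours with `x` and, outside `N(x)`, the neighbours `x, xᵢ, xⱼ`. -/
lemma add_three_le (hD : IsDezaGraph G n k b a) (hA : IsTypeA G b x) (hxi : xi ∈ dezaB G b x)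
    (hxj : xj ∈ dezaB G b x) (hij : xi ≠ xj)
    (hu : u ∈ G.neighborFinset x ∩ G.neighborFinset xi ∩ G.neighborFinset xj) : a + 3 ≤ k := by
  simp only [mem_inter, mem_neighborFinset] at hu
  have hsub : {x, xi, xj} ∪ (G.neighborFinset u ∩ G.neighborFinset x) ⊆ G.neighborFinset u := by
    refine union_subset ?_ inter_subset_left
    simp [insert_subset_iff, hu.1.1.symm, hu.1.2.symm, hu.2.symm]
  have hdisj : Disjoint {x, xi, xj} (G.neighborFinset u ∩ G.neighborFinset x) := by
    simp [not_adj_of_mem_dezaB hA hxi, not_adj_of_mem_dezaB hA hxj]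
  have hx : x ∉ ({xi, xj} : Finset V) := by
    simp [(mem_dezaB.1 hxi).1.symm, (mem_dezaB.1 hxj).1.symm]
  have hcard := card_le_card hsub
  rw [card_union_of_disjoint hdisj, card_insert_of_notMem hx, card_pair hij,
    card_neighborFinset_eq_degree, hD.2.2.1 u] at hcard
  have ha : #(G.neighborFinset u ∩ G.neighborFinset x) = a := hD.commonNbrs_eq_of_adj hA hu.1.1
  omega

lemma eq_of_sdiff_eq_of_sdiff_eq (hD : IsDezaGraph G n (b + 1) b a)
    (h₁ : G.neighborFinset x \ G.neighborFinset xi = G.neighborFinset x \ G.neighborFinset xj)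
    (h₂ : G.neighborFinset xi \ G.neighborFinset x = G.neighborFinset xj \ G.neighborFinset x) :
    xi = xj := by
  obtain ⟨-, -, hreg, hab, halt⟩ := hD
  by_contra hij
  have hN := Finset.eq_of_sdiff_eq_of_sdiff_eq h₁ h₂
  have hk : commonNbrs G xi xj = b + 1 := by
    rw [commonNbrs, hN, inter_self, card_neighborFinset_eq_degree, hreg xj]
  rcases halt xi xj hij with h | h <;> omega

end IsDezaGraph

lemma IsStrictlyDezaGraph.sdiff_eq_or_sdiff_eq (hG : IsStrictlyDezaGraph G n (b + 1) b a)
    (hA : IsTypeA G b x) (hxi : xi ∈ dezaB G b x) (hxj : xj ∈ dezaB G b x) :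
    G.neighborFinset x \ G.neighborFinset xi = G.neighborFinset x \ G.neighborFinset xj ∨
      G.neighborFinset xi \ G.neighborFinset x = G.neighborFinset xj \ G.neighborFinset x := by
  by_contra! ⟨hy, hz⟩
  obtain ⟨hD, hconn, hdist, -, hnsrg⟩ := hG
  have ⟨_, hn, hreg, _, halt⟩ := hD
  have hij : xi ≠ xj := by rintro rfl; exact hy rfl
  have hcard := card_inter_inter_neighborFinset_add_two hreg hxi hxj hy
  have ha : a + 1 = b := by
    have h := halt xi xj hij
    rw [commonNbrs, ← inter_inter_eq_inter_of_disjoint (disjoint_of_card_eq_one_of_ne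
      (card_sdiff_neighborFinset_eq_one hreg hxi).2 (card_sdiff_neighborFinset_eq_one hreg hxj).2
      hz)] at h
    omega
  rcases (G.neighborFinset x ∩ G.neighborFinset xi ∩ G.neighborFinset xj).eq_empty_or_nonempty
    with hempty | ⟨u, hu⟩
  · obtain rfl : b = 1 := by rw [hempty, card_empty] at hcard; omega
    exact hnsrg ⟨0, 1, isSRGWith_of_isRegularOfDegree_two hn hreg hconn hdist
      (fun v w hvw => by rcases halt v w hvw with h | h <;> omega)
      (mem_dezaB.1 hxi).1.symm (not_adj_of_mem_dezaB hA hxi)⟩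
  · have := hD.add_three_le hA hxi hxj hij hu
    omega

end SimpleGraph

theorem stmt10 {V : Type u} [Fintype V] [DecidableEq V] (G : SimpleGraph V)
    [DecidableRel G.Adj] (n k b a : ℕ)
    (hG : IsStrictlyDezaGraph G n k b a) (hk : k = b + 1)
    (hβ : ∀ v : V, 1 < (dezaB G b v).card) :
    ∀ x : V, IsTypeA G b x →
      ((∃! y : V, y ∈ G.neighborFinset x ∧
          ∀ xi ∈ dezaB G b x, G.neighborFinset x \ G.neighborFinset xi = {y}) ∧
        ((dezaB G b x).biUnion fun xi =>
            G.neighborFinset xi \ G.neighborFinset x).card = (dezaB G b x).card) ∨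
      ((∃! z : V, z ∉ insert x (G.neighborFinset x) ∧
          ∀ xi ∈ dezaB G b x, G.neighborFinset xi \ G.neighborFinset x = {z}) ∧
        ((dezaB G b x).biUnion fun xi =>
            G.neighborFinset x \ G.neighborFinset xi).card = (dezaB G b x).card) := by
  intro x hA
  subst hk
  have hsdiff xi (hxi : xi ∈ dezaB G b x) := card_sdiff_neighborFinset_eq_one hG.1.2.2.1 hxi
  obtain ⟨x₁, hx₁⟩ : (dezaB G b x).Nonempty := card_pos.1 (zero_lt_one.trans (hβ x))
  rcases forall_eq_or_forall_eq_of_forall_eq_or_eq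
    fun xi hxi xj hxj => hG.sdiff_eq_or_sdiff_eq hA hxi hxj with hconst | hconst
  · obtain ⟨y, hy⟩ := card_eq_one.1 (hsdiff x₁ hx₁).1
    have hyx : y ∈ G.neighborFinset x \ G.neighborFinset x₁ := hy ▸ mem_singleton_self y
    refine Or.inl ⟨existsUnique_of_forall_eq_singleton ⟨x₁, hx₁⟩ (mem_sdiff.1 hyx).1
      fun xi hxi => (hconst xi hxi x₁ hx₁).trans hy, card_biUnion_eq_card_of_injOn
      (fun xi hxi => (hsdiff xi hxi).2)
      fun xi hxi xj hxj => hG.1.eq_of_sdiff_eq_of_sdiff_eq (hconst xi hxi xj hxj)⟩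
  · obtain ⟨z, hz⟩ := card_eq_one.1 (hsdiff x₁ hx₁).2
    have hzx : z ∈ G.neighborFinset x₁ \ G.neighborFinset x := hz ▸ mem_singleton_self z
    refine Or.inr ⟨existsUnique_of_forall_eq_singleton ⟨x₁, hx₁⟩
      (notMem_insert_neighborFinset_of_mem_sdiff hA hx₁ hzx)
      fun xi hxi => (hconst xi hxi x₁ hx₁).trans hz, card_biUnion_eq_card_of_injOn
      (fun xi hxi => (hsdiff xi hxi).1)
      fun xi hxi xj hxj h => hG.1.eq_of_sdiff_eq_of_sdiff_eq h (hconst xi hxi xj hxj)⟩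
end
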